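/- arXiv:1804.09355 — 2 statements merged into one kernel-verified Lean document; each statement's English description precedes it below -/
import Mathlib

section
/- Let ρ be an n×n complex density matrix with spectral decomposition ρ = ∑_i λ_i |e_i⟩⟨e_i|, and let A, B be Hermitian n×n matrices. Then |∑_{i,j : λ_i + λ_j ≠ 0} ((λ_i − λ_j)² / (λ_i + λ_j)) ⟨e_i, A e_j⟩⟨e_j, B e_i⟩| ≤ (1/2) √(I_F(ρ,A) · I_F(ρ,B)). -/
open Matrix BigOperators ComplexOrder

/-- The complex inner product `⟨x, y⟩ = ∑ k, conj (x k) * y k`. -/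
noncomputable def dotc {ι : Type*} [Fintype ι] (x y : ι → ℂ) : ℂ :=
  ∑ k, (starRingEnd ℂ) (x k) * y k

/-- Quantum Fisher information of a state with spectral data `(lam, e)` with respect to
the observable `A`. -/
noncomputable def qfi {ι : Type*} [Fintype ι] (lam : ι → ℝ) (e : ι → ι → ℂ)
    (A : Matrix ι ι ℂ) : ℝ :=
  2 * ∑ i, ∑ j, if lam i + lam j ≠ 0 then
      ((lam i - lam j) ^ 2 / (lam i + lam j)) * Complex.normSq (dotc (e i) (A.mulVec (e j)))
    else 0

/-- The cross term
`∑_{i,j : λ_i + λ_j ≠ 0} ((λ_i − λ_j)² / (λ_i + λ_j)) ⟨e_i, A e_j⟩⟨e_j, B e_i⟩`. -/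
noncomputable def qfiCross {ι : Type*} [Fintype ι] (lam : ι → ℝ) (e : ι → ι → ℂ)
    (A B : Matrix ι ι ℂ) : ℂ :=
  ∑ i, ∑ j, if lam i + lam j ≠ 0 then
      (((lam i - lam j) ^ 2 / (lam i + lam j) : ℝ) : ℂ) *
        (dotc (e i) (A.mulVec (e j)) * dotc (e j) (B.mulVec (e i)))
    else 0

/-- Cauchy–Schwarz bound on the QFI cross term:
`|∑_{i,j} ((λ_i − λ_j)²/(λ_i + λ_j)) ⟨e_i, A e_j⟩⟨e_j, B e_i⟩| ≤ (1/2) √(I_F(ρ,A) I_F(ρ,B))`. -/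
theorem qfiCross_abs_le {n : ℕ} (ρ A B : Matrix (Fin n) (Fin n) ℂ)
    (lam : Fin n → ℝ) (e : Fin n → Fin n → ℂ)
    (hρ : ρ.PosSemidef) (htr : ρ.trace = 1)
    (hON : ∀ i j, dotc (e i) (e j) = if i = j then 1 else 0)
    (hlam : ∀ i, 0 ≤ lam i)
    (hdec : ρ = ∑ i, (lam i : ℂ) •
      Matrix.vecMulVec (e i) (fun k => (starRingEnd ℂ) (e i k)))
    (hA : A.IsHermitian) (hB : B.IsHermitian) :
    ‖qfiCross lam e A B‖ ≤ (1 / 2) * Real.sqrt (qfi lam e A * qfi lam e B) := by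
  classical
  set a : Fin n → Fin n → ℂ := fun i j => dotc (e i) (A.mulVec (e j)) with ha
  set b : Fin n → Fin n → ℂ := fun i j => dotc (e i) (B.mulVec (e j)) with hb
  set w : Fin n → Fin n → ℝ := fun i j =>
    if lam i + lam j ≠ 0 then (lam i - lam j) ^ 2 / (lam i + lam j) else 0 with hwdef
  have hw0 : ∀ i j, 0 ≤ w i j := by
    intro i j
    simp only [hwdef]
    split
    · rename_i h
      have hpos : 0 < lam i + lam j :=
        lt_of_le_of_ne (add_nonneg (hlam i) (hlam j)) (Ne.symm h)
      positivity
    · exact le_refl 0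
  have hwsym : ∀ i j, w i j = w j i := by
    intro i j
    simp only [hwdef, add_comm (lam i) (lam j)]
    rw [show (lam i - lam j) ^ 2 = (lam j - lam i) ^ 2 by ring]
  -- rewrite cross term
  have hcross : qfiCross lam e A B = ∑ i, ∑ j, ((w i j : ℝ) : ℂ) * (a i j * b j i) := by
    refine Finset.sum_congr rfl fun i _ => Finset.sum_congr rfl fun j _ => ?_
    simp only [hwdef]
    split <;> simp [ha, hb]
  -- rewrite qfi
  have hqfiA : qfi lam e A = 2 * ∑ i, ∑ j, w i j * ‖a i j‖ ^ 2 := by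
    unfold qfi
    congr 1
    refine Finset.sum_congr rfl fun i _ => Finset.sum_congr rfl fun j _ => ?_
    rw [Complex.sq_norm]
    simp only [hwdef]
    split <;> simp [ha, hb]
  have hqfiB : qfi lam e B = 2 * ∑ i, ∑ j, w i j * ‖b j i‖ ^ 2 := by
    unfold qfi
    rw [Finset.sum_comm]
    congr 1
    refine Finset.sum_congr rfl fun i _ => Finset.sum_congr rfl fun j _ => ?_
    rw [Complex.sq_norm, hwsym]
    simp only [hwdef]
    split <;> simp [ha, hb]
  set QA : ℝ := ∑ i, ∑ j, w i j * ‖a i j‖ ^ 2 with hQA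
  set QB : ℝ := ∑ i, ∑ j, w i j * ‖b j i‖ ^ 2 with hQB
  have hQA0 : 0 ≤ QA :=
    Finset.sum_nonneg fun i _ => Finset.sum_nonneg fun j _ =>
      mul_nonneg (hw0 i j) (sq_nonneg _)
  have hQB0 : 0 ≤ QB :=
    Finset.sum_nonneg fun i _ => Finset.sum_nonneg fun j _ =>
      mul_nonneg (hw0 i j) (sq_nonneg _)
  -- triangle inequality
  have h1 : ‖qfiCross lam e A B‖ ≤
      ∑ i, ∑ j, w i j * ‖a i j‖ * ‖b j i‖ := by
    rw [hcross]
    refine le_trans (norm_sum_le _ _) (Finset.sum_le_sum fun i _ => ?_)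
    refine le_trans (norm_sum_le _ _) (Finset.sum_le_sum fun j _ => ?_)
    rw [norm_mul, norm_mul, Complex.norm_real, Real.norm_eq_abs, abs_of_nonneg (hw0 i j), mul_assoc]
  -- Cauchy-Schwarz over pairs
  have h2 : (∑ p : Fin n × Fin n, w p.1 p.2 * ‖a p.1 p.2‖ * ‖b p.2 p.1‖) ^ 2
      ≤ (∑ p : Fin n × Fin n, w p.1 p.2 * ‖a p.1 p.2‖ ^ 2) *
        ∑ p : Fin n × Fin n, w p.1 p.2 * ‖b p.2 p.1‖ ^ 2 := by
    refine Finset.sum_sq_le_sum_mul_sum_of_sq_eq_mul _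
      (fun p _ => mul_nonneg (hw0 p.1 p.2) (sq_nonneg _))
      (fun p _ => mul_nonneg (hw0 p.1 p.2) (sq_nonneg _))
      (fun p _ => ?_)
    ring
  rw [Fintype.sum_prod_type, Fintype.sum_prod_type, Fintype.sum_prod_type, ← hQA, ← hQB] at h2
  have h3 : ‖qfiCross lam e A B‖ ≤ Real.sqrt (QA * QB) := by
    refine le_trans h1 ?_
    have hT0 : 0 ≤ ∑ i, ∑ j, w i j * ‖a i j‖ * ‖b j i‖ :=
      Finset.sum_nonneg fun i _ => Finset.sum_nonneg fun j _ =>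
        mul_nonneg (mul_nonneg (hw0 i j) (norm_nonneg _)) (norm_nonneg _)
    rw [Real.le_sqrt hT0]
    · exact h2
    · exact mul_nonneg hQA0 hQB0
  refine le_trans h3 (le_of_eq ?_)
  rw [hqfiA, hqfiB]
  rw [show 2 * QA * (2 * QB) = 4 * (QA * QB) by ring, Real.sqrt_mul (by norm_num) (QA * QB),
    show Real.sqrt 4 = 2 by
      rw [show (4:ℝ) = 2 ^ 2 by norm_num, Real.sqrt_sq (by norm_num)]]
  ring
end

section
/- Let p_1, …, p_m be nonnegative reals with ∑_i p_i = 1, let ρ^(1), …, ρ^(m) be n×n complex density matrices, and let L be a Hermitian n×n matrix. Form the quantum-classical state ρ := ∑_{i=1}^m p_i ρ^(i) ⊗ |i⟩⟨i| on ℂ^n ⊗ ℂ^m, where (|i⟩) is the standard orthonormal basis of ℂ^m. Then I_F(ρ, L ⊗ I_m) = ∑_{i=1}^m p_i I_F(ρ^(i), L). -/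
open Matrix BigOperators ComplexOrder Kronecker

section key
variable {ι : Type*} [Fintype ι] [DecidableEq ι]

lemma complete_of_ON {v : ι → ι → ℂ}
    (hON : ∀ a b, dotc (v a) (v b) = if a = b then 1 else 0) (k l : ι) :
    ∑ a, v a k * (starRingEnd ℂ) (v a l) = if k = l then 1 else 0 := by
  classical
  set U : Matrix ι ι ℂ := Matrix.of (fun k a => v a k) with hU
  have hUhU : Uᴴ * U = 1 := by
    ext a b
    simp only [Matrix.mul_apply, Matrix.conjTranspose_apply, hU, Matrix.of_apply,
      Matrix.one_apply]
    simpa [dotc] using hON a b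
  have hUU : U * Uᴴ = 1 := mul_eq_one_comm.mp hUhU
  have := congrFun (congrFun (congrArg (fun M => (M : Matrix ι ι ℂ)) hUU) k) l
  simpa [Matrix.mul_apply, Matrix.conjTranspose_apply, hU, Matrix.one_apply] using this

lemma parseval {v : ι → ι → ℂ}
    (hON : ∀ a b, dotc (v a) (v b) = if a = b then 1 else 0) (x y : ι → ℂ) :
    dotc x y = ∑ a, dotc x (v a) * dotc (v a) y := by
  have hc := complete_of_ON hON
  symm
  calc ∑ a, dotc x (v a) * dotc (v a) y
      = ∑ a, ∑ k, ∑ l, (starRingEnd ℂ) (x k) * y l * (v a k * (starRingEnd ℂ) (v a l)) := by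
        refine Finset.sum_congr rfl fun a _ => ?_
        simp only [dotc, Finset.sum_mul, Finset.mul_sum]
        rw [Finset.sum_comm]
        refine Finset.sum_congr rfl fun k _ => Finset.sum_congr rfl fun l _ => ?_
        ring
    _ = ∑ k, ∑ l, (starRingEnd ℂ) (x k) * y l * ∑ a, (v a k * (starRingEnd ℂ) (v a l)) := by
        rw [Finset.sum_comm]
        refine Finset.sum_congr rfl fun k _ => ?_
        rw [Finset.sum_comm]
        refine Finset.sum_congr rfl fun l _ => ?_
        rw [Finset.mul_sum]
    _ = dotc x y := by
        simp only [hc, mul_ite, mul_one, mul_zero, Finset.sum_ite_eq, Finset.mem_univ,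
          if_true, dotc]

end key
section key2
variable {ι : Type*} [Fintype ι] [DecidableEq ι]

lemma dotc_conj (x y : ι → ℂ) : (starRingEnd ℂ) (dotc x y) = dotc y x := by
  simp only [dotc, map_sum, RingHom.map_mul, Complex.conj_conj]
  exact Finset.sum_congr rfl fun k _ => mul_comm _ _

lemma dotc_sum_right (z : ι → ℂ) (c : ι → ℂ) (u : ι → ι → ℂ) :
    dotc z (fun k => ∑ b, c b * u b k) = ∑ b, c b * dotc z (u b) := by
  simp only [dotc, Finset.mul_sum]
  rw [Finset.sum_comm]
  refine Finset.sum_congr rfl fun b _ => Finset.sum_congr rfl fun k _ => ?_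
  ring

lemma mulVec_decomp (μ : ι → ℝ) (v : ι → ι → ℂ) (x : ι → ℂ) (k : ι) :
    ((∑ a, (μ a : ℂ) • Matrix.vecMulVec (v a) (fun k => (starRingEnd ℂ) (v a k))).mulVec x) k
      = ∑ a, (μ a : ℂ) * dotc (v a) x * v a k := by
  simp only [Matrix.mulVec, dotProduct, Matrix.sum_apply, Matrix.smul_apply,
    Matrix.vecMulVec_apply, smul_eq_mul, dotc, Finset.sum_mul, Finset.mul_sum]
  rw [Finset.sum_comm]
  refine Finset.sum_congr rfl fun a _ => Finset.sum_congr rfl fun j _ => ?_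
  ring

lemma expand_in_basis {v : ι → ι → ℂ}
    (hv : ∀ a b, dotc (v a) (v b) = if a = b then 1 else 0) (y : ι → ℂ) (k : ι) :
    y k = ∑ b, dotc (v b) y * v b k := by
  have hc := complete_of_ON hv
  symm
  calc ∑ b, dotc (v b) y * v b k
      = ∑ b, ∑ l, y l * ((starRingEnd ℂ) (v b l) * v b k) := by
        refine Finset.sum_congr rfl fun b _ => ?_
        simp only [dotc, Finset.sum_mul]
        refine Finset.sum_congr rfl fun l _ => ?_
        ring
    _ = ∑ l, y l * ∑ b, v b k * (starRingEnd ℂ) (v b l) := by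
        rw [Finset.sum_comm]
        refine Finset.sum_congr rfl fun l _ => ?_
        rw [Finset.mul_sum]
        refine Finset.sum_congr rfl fun b _ => ?_
        ring
    _ = y k := by simp [hc, eq_comm]

end key2
set_option linter.unusedSectionVars false

section key3
variable {ι : Type*} [Fintype ι] [DecidableEq ι]

lemma orth_of_decomp {μ Λ : ι → ℝ} {v E : ι → ι → ℂ}
    (hv : ∀ a b, dotc (v a) (v b) = if a = b then 1 else 0)
    (hE : ∀ a b, dotc (E a) (E b) = if a = b then 1 else 0)
    (hdec : (∑ a, (μ a : ℂ) • Matrix.vecMulVec (v a) (fun k => (starRingEnd ℂ) (v a k)))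
        = ∑ a, (Λ a : ℂ) • Matrix.vecMulVec (E a) (fun k => (starRingEnd ℂ) (E a k)))
    (c a : ι) (hne : Λ c ≠ μ a) : dotc (E c) (v a) = 0 := by
  have hfun : ∀ k, (∑ b, (μ b : ℂ) * dotc (v b) (v a) * v b k)
      = ∑ d, (Λ d : ℂ) * dotc (E d) (v a) * E d k := by
    intro k
    rw [← mulVec_decomp μ v (v a) k, ← mulVec_decomp Λ E (v a) k, hdec]
  have h1 : dotc (E c) (fun k => ∑ b, ((μ b : ℂ) * dotc (v b) (v a)) * v b k)
      = dotc (E c) (fun k => ∑ d, ((Λ d : ℂ) * dotc (E d) (v a)) * E d k) := by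
    congr 1
    funext k
    simpa [mul_assoc] using hfun k
  rw [dotc_sum_right, dotc_sum_right] at h1
  simp only [hv, hE, mul_ite, mul_one, mul_zero, ite_mul, zero_mul,
    Finset.sum_ite_eq', Finset.sum_ite_eq, Finset.mem_univ, if_true] at h1
  -- h1 : μ a * dotc (E c) (v a) = Λ c * dotc (E c) (v a)
  by_contra hM
  apply hne
  have := mul_right_cancel₀ hM h1
  exact_mod_cast this.symm

noncomputable def Fc (α β : ℝ) : ℂ :=
  if α + β ≠ 0 then (((α - β) ^ 2 / (α + β) : ℝ) : ℂ) else 0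

lemma qfi_eq_re {lam : ι → ℝ} {e : ι → ι → ℂ} {A : Matrix ι ι ℂ} :
    (qfi lam e A : ℂ)
      = 2 * ∑ q : ι × ι, Fc (lam q.1) (lam q.2) *
          (dotc (e q.1) (A.mulVec (e q.2)) * (starRingEnd ℂ) (dotc (e q.1) (A.mulVec (e q.2)))) := by
  rw [qfi, Fintype.sum_prod_type]
  push_cast
  rw [Finset.mul_sum, Finset.mul_sum]
  refine Finset.sum_congr rfl fun i _ => ?_
  rw [Finset.mul_sum, Finset.mul_sum]
  refine Finset.sum_congr rfl fun j _ => ?_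
  rw [Complex.mul_conj, Fc]
  split_ifs with h
  · push_cast; ring
  · simp

end key3
section key4
variable {ι : Type*} [Fintype ι] [DecidableEq ι]

lemma sum_magic {κ : Type*} [Fintype κ] [DecidableEq κ] (F G T : κ → ℂ) (K : κ → κ → ℂ)
    (W : κ → ℂ)
    (hFG : ∀ q r, F q * K q r = G r * K q r)
    (hK : ∀ r r', ∑ q, K q r * (starRingEnd ℂ) (K q r') = if r = r' then 1 else 0)
    (hW : ∀ q, W q = ∑ r, K q r * T r) :
    ∑ q, F q * (W q * (starRingEnd ℂ) (W q))
      = ∑ r, G r * (T r * (starRingEnd ℂ) (T r)) := by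
  calc ∑ q, F q * (W q * (starRingEnd ℂ) (W q))
      = ∑ q, ∑ r, ∑ r', (G r * T r * (starRingEnd ℂ) (T r'))
          * (K q r * (starRingEnd ℂ) (K q r')) := by
        refine Finset.sum_congr rfl fun q _ => ?_
        rw [hW q, map_sum, Finset.sum_mul_sum, Finset.mul_sum]
        refine Finset.sum_congr rfl fun r _ => ?_
        rw [Finset.mul_sum]
        refine Finset.sum_congr rfl fun r' _ => ?_
        rw [RingHom.map_mul]
        linear_combination (T r * (starRingEnd ℂ) (K q r') * (starRingEnd ℂ) (T r')) * hFG q r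
    _ = ∑ r, ∑ r', (G r * T r * (starRingEnd ℂ) (T r'))
          * ∑ q, (K q r * (starRingEnd ℂ) (K q r')) := by
        rw [Finset.sum_comm]
        refine Finset.sum_congr rfl fun r _ => ?_
        rw [Finset.sum_comm]
        refine Finset.sum_congr rfl fun r' _ => ?_
        rw [← Finset.mul_sum]
    _ = ∑ r, G r * (T r * (starRingEnd ℂ) (T r)) := by
        simp only [hK, mul_ite, mul_one, mul_zero, Finset.sum_ite_eq, Finset.mem_univ, if_true]
        exact Finset.sum_congr rfl fun r _ => by ring

lemma qfi_eq_of_decomp {μ Λ : ι → ℝ} {v E : ι → ι → ℂ} (B : Matrix ι ι ℂ)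
    (hv : ∀ a b, dotc (v a) (v b) = if a = b then 1 else 0)
    (hE : ∀ a b, dotc (E a) (E b) = if a = b then 1 else 0)
    (hdec : (∑ a, (μ a : ℂ) • Matrix.vecMulVec (v a) (fun k => (starRingEnd ℂ) (v a k)))
        = ∑ a, (Λ a : ℂ) • Matrix.vecMulVec (E a) (fun k => (starRingEnd ℂ) (E a k))) :
    qfi Λ E B = qfi μ v B := by
  have horth := orth_of_decomp hv hE hdec
  have hMa : ∀ a a', ∑ c, dotc (E c) (v a) * (starRingEnd ℂ) (dotc (E c) (v a'))
      = if a = a' then 1 else 0 := by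
    intro a a'
    calc ∑ c, dotc (E c) (v a) * (starRingEnd ℂ) (dotc (E c) (v a'))
        = ∑ c, dotc (v a') (E c) * dotc (E c) (v a) := by
          refine Finset.sum_congr rfl fun c _ => ?_
          rw [dotc_conj]; ring
      _ = dotc (v a') (v a) := (parseval hE _ _).symm
      _ = if a = a' then 1 else 0 := by rw [hv]; simp [eq_comm]
  have hMb : ∀ b b', ∑ d, (starRingEnd ℂ) (dotc (E d) (v b)) * dotc (E d) (v b')
      = if b = b' then 1 else 0 := by
    intro b b'
    calc ∑ d, (starRingEnd ℂ) (dotc (E d) (v b)) * dotc (E d) (v b')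
        = ∑ d, dotc (v b) (E d) * dotc (E d) (v b') := by
          refine Finset.sum_congr rfl fun d _ => ?_
          rw [dotc_conj]
      _ = dotc (v b) (v b') := (parseval hE _ _).symm
      _ = if b = b' then 1 else 0 := hv b b'
  -- instantiate sum_magic over κ = ι × ι
  have key := sum_magic (κ := ι × ι)
    (fun q => Fc (Λ q.1) (Λ q.2)) (fun r => Fc (μ r.1) (μ r.2))
    (fun r => dotc (v r.1) (B.mulVec (v r.2)))
    (fun q r => dotc (E q.1) (v r.1) * (starRingEnd ℂ) (dotc (E q.2) (v r.2)))
    (fun q => dotc (E q.1) (B.mulVec (E q.2)))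
    (by
      intro q r
      by_cases h1 : dotc (E q.1) (v r.1) = 0
      · simp [h1]
      by_cases h2 : dotc (E q.2) (v r.2) = 0
      · simp [h2]
      have e1 : Λ q.1 = μ r.1 := by
        by_contra hne; exact h1 (horth _ _ hne)
      have e2 : Λ q.2 = μ r.2 := by
        by_contra hne; exact h2 (horth _ _ hne)
      rw [e1, e2])
    (by
      intro r r'
      calc ∑ q : ι × ι, (dotc (E q.1) (v r.1) * (starRingEnd ℂ) (dotc (E q.2) (v r.2)))
            * (starRingEnd ℂ) (dotc (E q.1) (v r'.1) * (starRingEnd ℂ) (dotc (E q.2) (v r'.2)))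
          = ∑ c, ∑ d, (dotc (E c) (v r.1) * (starRingEnd ℂ) (dotc (E c) (v r'.1)))
              * ((starRingEnd ℂ) (dotc (E d) (v r.2)) * dotc (E d) (v r'.2)) := by
            rw [Fintype.sum_prod_type]
            refine Finset.sum_congr rfl fun c _ => Finset.sum_congr rfl fun d _ => ?_
            simp only [RingHom.map_mul, Complex.conj_conj]
            ring
        _ = (∑ c, dotc (E c) (v r.1) * (starRingEnd ℂ) (dotc (E c) (v r'.1)))
              * (∑ d, (starRingEnd ℂ) (dotc (E d) (v r.2)) * dotc (E d) (v r'.2)) := by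
            rw [Finset.sum_mul_sum]
        _ = (if r.1 = r'.1 then 1 else 0) * (if r.2 = r'.2 then 1 else 0) := by
            rw [hMa, hMb]
        _ = if r = r' then 1 else 0 := by
            by_cases h1 : r.1 = r'.1 <;> by_cases h2 : r.2 = r'.2 <;>
              simp [Prod.ext_iff, h1, h2])
    (by
      intro q
      have hmv : ∀ k, (B.mulVec (E q.2)) k
          = ∑ b, dotc (v b) (E q.2) * (B.mulVec (v b)) k := by
        intro k
        simp only [Matrix.mulVec, dotProduct]
        calc ∑ j, B k j * E q.2 j
            = ∑ j, B k j * ∑ b, dotc (v b) (E q.2) * v b j := by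
              refine Finset.sum_congr rfl fun j _ => ?_
              rw [← expand_in_basis hv]
          _ = ∑ b, dotc (v b) (E q.2) * ∑ j, B k j * v b j := by
              simp only [Finset.mul_sum]
              rw [Finset.sum_comm]
              exact Finset.sum_congr rfl fun b _ => Finset.sum_congr rfl fun j _ => by ring
      calc dotc (E q.1) (B.mulVec (E q.2))
          = dotc (E q.1) (fun k => ∑ b, dotc (v b) (E q.2) * (B.mulVec (v b)) k) := by
            congr 1
            funext k
            exact hmv k
        _ = ∑ b, dotc (v b) (E q.2) * dotc (E q.1) (B.mulVec (v b)) := dotc_sum_right _ _ _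
        _ = ∑ b, ∑ a, dotc (v b) (E q.2) * (dotc (E q.1) (v a) * dotc (v a) (B.mulVec (v b))) := by
            refine Finset.sum_congr rfl fun b _ => ?_
            rw [parseval hv (E q.1) (B.mulVec (v b)), Finset.mul_sum]
        _ = ∑ r : ι × ι, (dotc (E q.1) (v r.1) * (starRingEnd ℂ) (dotc (E q.2) (v r.2)))
              * dotc (v r.1) (B.mulVec (v r.2)) := by
            rw [Fintype.sum_prod_type]
            rw [Finset.sum_comm]
            refine Finset.sum_congr rfl fun a _ => Finset.sum_congr rfl fun b _ => ?_
            rw [dotc_conj]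
            ring)
  have hcast : (qfi Λ E B : ℂ) = (qfi μ v B : ℂ) := by
    rw [qfi_eq_re, qfi_eq_re]
    rw [key]
  exact_mod_cast hcast

end key4
section main
variable {n m : ℕ}

lemma hv'_ON (e : Fin m → Fin n → Fin n → ℂ)
    (hON : ∀ i a b, dotc (e i a) (e i b) = if a = b then 1 else 0) :
    ∀ q q' : Fin n × Fin m,
      dotc (fun r : Fin n × Fin m => e q.2 q.1 r.1 * (if r.2 = q.2 then 1 else 0))
           (fun r : Fin n × Fin m => e q'.2 q'.1 r.1 * (if r.2 = q'.2 then 1 else 0))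
        = if q = q' then 1 else 0 := by
  rintro ⟨a, i⟩ ⟨b, j⟩
  simp only [dotc, Fintype.sum_prod_type]
  by_cases hij : i = j
  · subst hij
    have h1 : ∀ k : Fin n, ∑ l : Fin m,
        (starRingEnd ℂ) (e i a k * (if l = i then 1 else 0))
          * (e i b k * (if l = i then 1 else 0))
        = (starRingEnd ℂ) (e i a k) * e i b k := by
      intro k
      simp [apply_ite (starRingEnd ℂ), ite_mul, mul_ite]
    rw [Finset.sum_congr rfl fun k _ => h1 k]
    have := hON i a b
    simp only [dotc] at this
    rw [this]
    simp [Prod.ext_iff]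
  · have h1 : ∀ k : Fin n, ∑ l : Fin m,
        (starRingEnd ℂ) (e i a k * (if l = i then 1 else 0))
          * (e j b k * (if l = j then 1 else 0)) = 0 := by
      intro k
      rw [Finset.sum_eq_zero]
      intro l _
      by_cases h2 : l = i
      · simp [h2, hij]
      · simp [h2]
    rw [Finset.sum_congr rfl fun k _ => h1 k]
    simp [Prod.ext_iff, hij]

lemma hdec'_match (p : Fin m → ℝ) (ρ : Fin m → Matrix (Fin n) (Fin n) ℂ)
    (lam : Fin m → Fin n → ℝ) (e : Fin m → Fin n → Fin n → ℂ)
    (hdec : ∀ i, ρ i = ∑ a, (lam i a : ℂ) •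
      Matrix.vecMulVec (e i a) (fun k => (starRingEnd ℂ) (e i a k))) :
    (∑ q : Fin n × Fin m, ((p q.2 * lam q.2 q.1 : ℝ) : ℂ) •
        Matrix.vecMulVec (fun r : Fin n × Fin m => e q.2 q.1 r.1 * (if r.2 = q.2 then 1 else 0))
          (fun r : Fin n × Fin m =>
            (starRingEnd ℂ) (e q.2 q.1 r.1 * (if r.2 = q.2 then 1 else 0))))
      = ∑ i, (p i : ℂ) • (ρ i ⊗ₖ Matrix.single i i (1 : ℂ)) := by
  ext ⟨k, l⟩ ⟨k', l'⟩
  simp only [Matrix.sum_apply, Matrix.smul_apply, Matrix.vecMulVec_apply, smul_eq_mul,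
    Matrix.kroneckerMap_apply, Matrix.single, Matrix.of_apply]
  rw [Fintype.sum_prod_type]
  rw [Finset.sum_comm]
  have hterm : ∀ i : Fin m, ∑ a : Fin n,
      ((p i * lam i a : ℝ) : ℂ) * ((e i a k * (if l = i then 1 else 0))
        * (starRingEnd ℂ) (e i a k' * (if l' = i then 1 else 0)))
      = (p i : ℂ) * (ρ i k k' * if i = l ∧ i = l' then 1 else 0) := by
    intro i
    by_cases hl : l = i
    · by_cases hl' : l' = i
      · have hand : i = l ∧ i = l' := ⟨hl.symm, hl'.symm⟩
        simp only [if_pos hl, if_pos hl', if_pos hand, mul_one, RingHom.map_mul]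
        rw [hdec i]
        simp only [Matrix.sum_apply, Matrix.smul_apply, Matrix.vecMulVec_apply, smul_eq_mul]
        rw [Finset.mul_sum]
        refine Finset.sum_congr rfl fun a _ => ?_
        push_cast
        ring
      · simp only [if_neg hl', if_pos hl]
        have : ¬ (i = l ∧ i = l') := fun h => hl' h.2.symm
        simp [this]
    · simp only [if_neg hl]
      have : ¬ (i = l ∧ i = l') := fun h => hl h.1.symm
      simp [this]
  exact Finset.sum_congr rfl fun i _ => hterm i

end main
lemma ite_scale (c α β s : ℝ) (hc : 0 ≤ c) :
    (if c * α + c * β ≠ 0 then ((c * α - c * β) ^ 2 / (c * α + c * β)) * s else 0)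
      = c * (if α + β ≠ 0 then ((α - β) ^ 2 / (α + β)) * s else 0) := by
  rcases eq_or_lt_of_le hc with h0 | hpos
  · simp [← h0]
  · have hc0 : c ≠ 0 := ne_of_gt hpos
    by_cases hab : α + β = 0
    · have h1 : c * α + c * β = 0 := by rw [← mul_add, hab, mul_zero]
      simp [h1, hab]
    · have h1 : c * α + c * β ≠ 0 := by
        rw [← mul_add]; exact mul_ne_zero hc0 hab
      rw [if_pos h1, if_pos hab]
      have h2 : (c * α - c * β) ^ 2 / (c * α + c * β) = c * ((α - β) ^ 2 / (α + β)) := by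
        field_simp
      rw [h2]
      ring

lemma qfi_prod {n m : ℕ} (p : Fin m → ℝ) (hp : ∀ i, 0 ≤ p i)
    (lam : Fin m → Fin n → ℝ) (e : Fin m → Fin n → Fin n → ℂ)
    (L : Matrix (Fin n) (Fin n) ℂ) :
    qfi (fun q : Fin n × Fin m => p q.2 * lam q.2 q.1)
        (fun q r : Fin n × Fin m => e q.2 q.1 r.1 * (if r.2 = q.2 then 1 else 0))
        (L ⊗ₖ (1 : Matrix (Fin m) (Fin m) ℂ))
      = ∑ i, p i * qfi (lam i) (e i) L := by
  have hmv : ∀ (b : Fin n) (j : Fin m) (k : Fin n) (l : Fin m),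
      ((L ⊗ₖ (1 : Matrix (Fin m) (Fin m) ℂ)).mulVec
        (fun r : Fin n × Fin m => e j b r.1 * (if r.2 = j then 1 else 0))) (k, l)
      = (if l = j then 1 else 0) * (L.mulVec (e j b)) k := by
    intro b j k l
    simp only [Matrix.mulVec, dotProduct, Fintype.sum_prod_type,
      Matrix.kroneckerMap_apply, Matrix.one_apply]
    rw [Finset.mul_sum]
    refine Finset.sum_congr rfl fun k' _ => ?_
    by_cases hlj : l = j
    · subst hlj
      simp [mul_ite, ite_mul, Finset.sum_ite_eq]
    · simp only [mul_ite, ite_mul, mul_one, mul_zero, zero_mul, one_mul]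
      rw [Finset.sum_eq_zero, if_neg hlj]
      intro l' _
      by_cases h2 : l = l'
      · subst h2; simp [hlj]
      · simp [h2]
  have hdot : ∀ (a : Fin n) (i : Fin m) (b : Fin n) (j : Fin m),
      dotc (fun r : Fin n × Fin m => e i a r.1 * (if r.2 = i then 1 else 0))
        ((L ⊗ₖ (1 : Matrix (Fin m) (Fin m) ℂ)).mulVec
          (fun r : Fin n × Fin m => e j b r.1 * (if r.2 = j then 1 else 0)))
      = if j = i then dotc (e i a) (L.mulVec (e j b)) else 0 := by
    intro a i b j
    simp only [dotc, Fintype.sum_prod_type]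
    have hterm : ∀ k : Fin n, ∑ l : Fin m,
        (starRingEnd ℂ) (e i a k * (if l = i then 1 else 0))
          * (((L ⊗ₖ (1 : Matrix (Fin m) (Fin m) ℂ)).mulVec
              (fun r : Fin n × Fin m => e j b r.1 * (if r.2 = j then 1 else 0))) (k, l))
        = (if j = i then 1 else 0) * ((starRingEnd ℂ) (e i a k) * (L.mulVec (e j b)) k) := by
      intro k
      rw [Finset.sum_congr rfl fun l _ => by rw [hmv b j k l]]
      by_cases hji : j = i
      · subst hji
        rw [if_pos rfl, one_mul, Finset.sum_eq_single j]
        · simp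
        · intro l _ hlj
          simp [hlj]
        · simp
      · rw [if_neg hji, zero_mul, Finset.sum_eq_zero]
        intro l _
        by_cases h2 : l = i
        · subst h2
          have hlj : ¬ l = j := fun h => hji h.symm
          simp [hlj]
        · simp [h2]
    rw [Finset.sum_congr rfl fun k _ => hterm k]
    by_cases hji : j = i
    · simp [hji, dotc, Finset.mul_sum]
    · simp [hji]
  rw [qfi, Fintype.sum_prod_type]
  rw [Finset.sum_comm]
  have hinner : ∀ (i : Fin m) (a : Fin n),
      ∑ q' : Fin n × Fin m,
        (if p i * lam i a + p q'.2 * lam q'.2 q'.1 ≠ 0 then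
          ((p i * lam i a - p q'.2 * lam q'.2 q'.1) ^ 2 / (p i * lam i a + p q'.2 * lam q'.2 q'.1))
            * Complex.normSq (dotc (fun r : Fin n × Fin m => e i a r.1 * (if r.2 = i then 1 else 0))
                ((L ⊗ₖ (1 : Matrix (Fin m) (Fin m) ℂ)).mulVec
                  (fun r : Fin n × Fin m => e q'.2 q'.1 r.1 * (if r.2 = q'.2 then 1 else 0))))
          else 0)
      = ∑ b, (if p i * lam i a + p i * lam i b ≠ 0 then
          ((p i * lam i a - p i * lam i b) ^ 2 / (p i * lam i a + p i * lam i b))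
            * Complex.normSq (dotc (e i a) (L.mulVec (e i b)))
          else 0) := by
    intro i a
    rw [Fintype.sum_prod_type, Finset.sum_comm, Finset.sum_eq_single i]
    · refine Finset.sum_congr rfl fun b _ => ?_
      rw [hdot a i b i, if_pos rfl]
    · intro j _ hji
      rw [Finset.sum_eq_zero]
      intro b _
      rw [hdot a i b j, if_neg hji]
      simp
    · simp
  rw [Finset.sum_congr rfl fun i _ => Finset.sum_congr rfl fun a _ => hinner i a]
  have hscale : ∀ (i : Fin m) (a b : Fin n),
      (if p i * lam i a + p i * lam i b ≠ 0 then
          ((p i * lam i a - p i * lam i b) ^ 2 / (p i * lam i a + p i * lam i b))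
            * Complex.normSq (dotc (e i a) (L.mulVec (e i b)))
          else 0)
      = p i * (if lam i a + lam i b ≠ 0 then
          ((lam i a - lam i b) ^ 2 / (lam i a + lam i b))
            * Complex.normSq (dotc (e i a) (L.mulVec (e i b)))
          else 0) :=
    fun i a b => ite_scale (p i) (lam i a) (lam i b) _ (hp i)
  rw [Finset.sum_congr rfl fun i _ => Finset.sum_congr rfl fun a _ =>
    Finset.sum_congr rfl fun b _ => hscale i a b]
  rw [Finset.mul_sum]
  refine Finset.sum_congr rfl fun i _ => ?_
  rw [qfi]
  simp only [← Finset.mul_sum]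
  ring

/-- For a quantum-classical state `ρ = ∑ i, p_i ρ⁽ⁱ⁾ ⊗ |i⟩⟨i|` (with `(p_i)` a probability
vector, each `ρ⁽ⁱ⁾` a density matrix, and `(|i⟩)` the standard basis of `ℂ^m`) and a
Hermitian observable `L`:  `I_F(ρ, L ⊗ I_m) = ∑ i, p_i I_F(ρ⁽ⁱ⁾, L)`, where the QFI of `ρ` is
computed from any spectral decomposition `(Λ, E)` of `ρ` and the QFI of each `ρ⁽ⁱ⁾` from any
spectral decomposition `(λ⁽ⁱ⁾, e⁽ⁱ⁾)`. -/
theorem qfi_quantum_classical {n m : ℕ}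
    (p : Fin m → ℝ) (ρ : Fin m → Matrix (Fin n) (Fin n) ℂ)
    (L : Matrix (Fin n) (Fin n) ℂ)
    (hp : ∀ i, 0 ≤ p i) (hpsum : ∑ i, p i = 1)
    (hρ : ∀ i, (ρ i).PosSemidef) (htr : ∀ i, (ρ i).trace = 1)
    (hL : L.IsHermitian)
    (lam : Fin m → Fin n → ℝ) (e : Fin m → Fin n → Fin n → ℂ)
    (hON : ∀ i a b, dotc (e i a) (e i b) = if a = b then 1 else 0)
    (hlam : ∀ i a, 0 ≤ lam i a)
    (hdec : ∀ i, ρ i = ∑ a, (lam i a : ℂ) •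
      Matrix.vecMulVec (e i a) (fun k => (starRingEnd ℂ) (e i a k)))
    (Lam : Fin n × Fin m → ℝ) (E : Fin n × Fin m → Fin n × Fin m → ℂ)
    (hONBig : ∀ a b, dotc (E a) (E b) = if a = b then 1 else 0)
    (hLamBig : ∀ a, 0 ≤ Lam a)
    (hdecBig : (∑ i, (p i : ℂ) • (ρ i ⊗ₖ Matrix.single i i (1 : ℂ)))
      = ∑ a, (Lam a : ℂ) • Matrix.vecMulVec (E a) (fun k => (starRingEnd ℂ) (E a k))) :
    qfi Lam E (L ⊗ₖ (1 : Matrix (Fin m) (Fin m) ℂ)) = ∑ i, p i * qfi (lam i) (e i) L := by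
  have h1 := hdec'_match p ρ lam e hdec
  have h2 : qfi Lam E (L ⊗ₖ (1 : Matrix (Fin m) (Fin m) ℂ))
      = qfi (fun q : Fin n × Fin m => p q.2 * lam q.2 q.1)
          (fun q r : Fin n × Fin m => e q.2 q.1 r.1 * (if r.2 = q.2 then 1 else 0))
          (L ⊗ₖ (1 : Matrix (Fin m) (Fin m) ℂ)) :=
    qfi_eq_of_decomp (μ := fun q : Fin n × Fin m => p q.2 * lam q.2 q.1) (Λ := Lam)
      (v := fun q r : Fin n × Fin m => e q.2 q.1 r.1 * (if r.2 = q.2 then 1 else 0))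
      (E := E) (L ⊗ₖ (1 : Matrix (Fin m) (Fin m) ℂ))
      (hv'_ON e hON) hONBig (h1.trans hdecBig)
  rw [h2, qfi_prod p hp lam e L]
end
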